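/- Let H be a finite-dimensional semisimple Hopf algebra with left integral t satisfying ε(t) = 1, and let R be an H-simple module algebra. Then r_{gt}(R) = 0 if and only if R has a unit, where R is r_{gt}-radical iff a ∈ G_t(a) for all a ∈ R, with G_t(a) = { x + (t·a)x + Σ(x_i(t·a)y_i + x_i y_i) : x, x_i, y_i ∈ R }. -/

import Mathlib

/-!
If `R` has a unit `e`, then `(h·e) r = ε(h) r` (a Sweedler computation with the antipode), so
`t·(-e)` acts as `-1` by left multiplication and `G_t(-e) = 0`. Hence `R` is not
`r_{gt}`-radical and, being `H`-simple, has `r_{gt}(R) = 0`.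

Conversely, if `r_{gt}(R) = 0` then `a ∉ G_t(a)` for some `a`. As `t` is a left integral,
`u = t·a` is `H`-invariant, which makes `G_t(a)` an `H`-ideal; it is proper, hence zero, and
`x + u x = 0` says that `-u` is a left unit. Then `{x + x u}` is an `H`-ideal annihilating `R`
from the left; as `R² ≠ 0` it is zero, so `-u` is a unit.
-/

open scoped TensorProduct

class HModAlg (k H R : Type*) [CommRing k] [Ring H] [Algebra k H]
    [Coalgebra k H] [NonUnitalRing R] [Module k R]
    [SMulCommClass k R R] [IsScalarTower k R R] where
  hsmul : H →ₗ[k] R →ₗ[k] R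
  one_hsmul : ∀ r : R, hsmul 1 r = r
  mul_hsmul : ∀ (h h' : H) (r : R), hsmul (h * h') r = hsmul h (hsmul h' r)
  hsmul_mul : ∀ (h : H) (a b : R),
    hsmul h (a * b) =
      LinearMap.mul' k R
        (TensorProduct.map (hsmul.flip a) (hsmul.flip b) (Coalgebra.comul h))

/-- product f 0 * f 1 * ⋯ * f n -/
def prodSeq {R : Type*} [Mul R] (f : ℕ → R) : ℕ → R
  | 0 => f 0
  | n + 1 => prodSeq f n * f (n + 1)

/-- `I` is a nilpotent subset: some power of it vanishes. -/
def IsNilpotentSet {R : Type*} [Mul R] [Zero R] (I : Set R) : Prop :=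
  ∃ n : ℕ, ∀ f : ℕ → R, (∀ i, f i ∈ I) → prodSeq f n = 0

/-- `I` is nilpotent modulo `J`. -/
def IsNilpotentSetMod {R : Type*} [Mul R] (I J : Set R) : Prop :=
  ∃ n : ℕ, ∀ f : ℕ → R, (∀ i, f i ∈ I) → prodSeq f n ∈ J

section Defs

variable (k H : Type*) {R : Type*} [CommRing k] [Ring H] [Algebra k H]
  [Coalgebra k H] [NonUnitalRing R] [Module k R]
  [SMulCommClass k R R] [IsScalarTower k R R] [HModAlg k H R]

/-- The action of `h : H` on `r : R`. -/
def hact (h : H) (r : R) : R := HModAlg.hsmul (k := k) h r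

/-- `I` is an `H`-ideal of the `H`-module (sub)algebra `B ⊆ R`. -/
structure IsHIdealIn (B I : Set R) : Prop where
  subset : I ⊆ B
  zero_mem : (0 : R) ∈ I
  add_mem : ∀ {x y : R}, x ∈ I → y ∈ I → x + y ∈ I
  neg_mem : ∀ {x : R}, x ∈ I → -x ∈ I
  mul_mem_left : ∀ {x : R}, x ∈ B → ∀ {y : R}, y ∈ I → x * y ∈ I
  mul_mem_right : ∀ {x : R}, x ∈ I → ∀ {y : R}, y ∈ B → x * y ∈ I
  hsmul_mem : ∀ (h : H) {x : R}, x ∈ I → hact k H h x ∈ I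

/-- `I` is an `H`-ideal of `R`. -/
def IsHIdeal (I : Set R) : Prop := IsHIdealIn k H Set.univ I

/-- `R` is `H`-semiprime. -/
def IsHSemiprime : Prop :=
  ∀ I : Set R, IsHIdeal k H I → IsNilpotentSet I → I = {0}

/-- The subalgebra `B` of `R` is `H`-semiprime. -/
def IsHSemiprimeIn (B : Set R) : Prop :=
  ∀ I : Set R, IsHIdealIn k H B I → IsNilpotentSet I → I = {0}

/-- `R` is `H`-prime. -/
def IsHPrime : Prop :=
  ∀ I J : Set R, IsHIdeal k H I → IsHIdeal k H J →
    (∀ a ∈ I, ∀ b ∈ J, a * b = 0) → I = {0} ∨ J = {0}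

/-- The `H`-ideal of `R` generated by `E`. -/
def genHIdeal (E : Set R) : Set R := ⋂₀ {I : Set R | IsHIdeal k H I ∧ E ⊆ I}

end Defs


/-- `z ∈ G_t(a)` computed within the subset `B` of `R`. -/
def memGt (k H : Type*) {R : Type*} [CommRing k] [Ring H] [Algebra k H]
    [Coalgebra k H] [NonUnitalRing R] [Module k R] [SMulCommClass k R R]
    [IsScalarTower k R R] [HModAlg k H R] (t : H) (B : Set R) (a z : R) : Prop :=
  ∃ x ∈ B, ∃ l : List (R × R), (∀ p ∈ l, p.1 ∈ B ∧ p.2 ∈ B) ∧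
    z = x + hact k H t a * x +
      (l.map fun p => p.1 * hact k H t a * p.2 + p.1 * p.2).sum

/-- `B` is an `r_{gt}`-`H`-ideal of `R`: an `H`-ideal on which `a ∈ G_t(a)`
(computed within `B`) for all `a ∈ B`. -/
def IsGtIdeal (k H : Type*) {R : Type*} [CommRing k] [Ring H] [Algebra k H]
    [Coalgebra k H] [NonUnitalRing R] [Module k R] [SMulCommClass k R R]
    [IsScalarTower k R R] [HModAlg k H R] (t : H) (B : Set R) : Prop :=
  IsHIdeal k H B ∧ ∀ a ∈ B, memGt k H t B a a

/-- `B = r_{gt}(R)`: the largest `r_{gt}`-`H`-ideal of `R`. -/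
def IsGtRadical (k H : Type*) {R : Type*} [CommRing k] [Ring H] [Algebra k H]
    [Coalgebra k H] [NonUnitalRing R] [Module k R] [SMulCommClass k R R]
    [IsScalarTower k R R] [HModAlg k H R] (t : H) (B : Set R) : Prop :=
  IsGtIdeal k H t B ∧ ∀ I : Set R, IsGtIdeal k H t I → I ⊆ B


lemma Coalgebra.sum_counit_right_smul {k A ι : Type*} [CommSemiring k] [AddCommMonoid A]
    [Module k A] [Coalgebra k A] {a : A} (𝓡 : Coalgebra.Repr k a ι) :
    ∑ i ∈ 𝓡.index, Coalgebra.counit (R := k) (𝓡.right i) • 𝓡.left i = a := by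
  simpa only [map_sum, TensorProduct.lift.tmul, LinearMap.flip_apply, LinearMap.lsmul_apply,
    one_smul] using
    congr(TensorProduct.lift (LinearMap.lsmul k A).flip $(Coalgebra.sum_tmul_counit_eq 𝓡))

namespace HModAlg

open Coalgebra

section Action

variable {k H R : Type*} [CommRing k] [Ring H] [Algebra k H] [Coalgebra k H]
  [NonUnitalRing R] [Module k R] [SMulCommClass k R R] [IsScalarTower k R R] [HModAlg k H R]

lemma hact_add (h : H) (x y : R) : hact k H h (x + y) = hact k H h x + hact k H h y :=
  map_add (hsmul h) x y

lemma hact_sub (h : H) (x y : R) : hact k H h (x - y) = hact k H h x - hact k H h y :=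
  map_sub (hsmul h) x y

lemma hact_neg (h : H) (x : R) : hact k H h (-x) = -hact k H h x :=
  map_neg (hsmul h) x

lemma one_hact (x : R) : hact k H 1 x = x :=
  one_hsmul x

lemma mul_hact (h h' : H) (x : R) : hact k H (h * h') x = hact k H h (hact k H h' x) :=
  mul_hsmul h h' x

lemma smul_hact (c : k) (h : H) (x : R) : hact k H (c • h) x = c • hact k H h x := by
  simp only [hact, map_smul, LinearMap.smul_apply]

lemma sum_hact {ι : Type*} (s : Finset ι) (f : ι → H) (x : R) :
    hact k H (∑ i ∈ s, f i) x = ∑ i ∈ s, hact k H (f i) x := by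
  simp only [hact, map_sum, LinearMap.sum_apply]

lemma hact_mul {ι : Type*} {h : H} (𝓡 : Repr k h ι) (x y : R) :
    hact k H h (x * y) = ∑ i ∈ 𝓡.index, hact k H (𝓡.left i) x * hact k H (𝓡.right i) y := by
  simp [hact, hsmul_mul, ← 𝓡.eq, map_sum]

def IsHInvariant (k H : Type*) {R : Type*} [CommRing k] [Ring H] [Algebra k H] [Coalgebra k H]
    [NonUnitalRing R] [Module k R] [SMulCommClass k R R] [IsScalarTower k R R] [HModAlg k H R]
    (v : R) : Prop :=
  ∀ h : H, hact k H h v = counit (R := k) h • v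

lemma IsHInvariant.neg {v : R} (hv : IsHInvariant k H v) : IsHInvariant k H (-v) := fun h => by
  rw [hact_neg, hv, smul_neg]

lemma isHInvariant_hact_of_mul_eq_counit_smul {t : H}
    (ht : ∀ h : H, h * t = counit (R := k) h • t) (a : R) : IsHInvariant k H (hact k H t a) := by
  intro h
  rw [← mul_hact, ht, smul_hact]

lemma hact_mul_of_isHInvariant_left {v : R} (hv : IsHInvariant k H v) (h : H) (x : R) :
    hact k H h (v * x) = v * hact k H h x := by
  unfold IsHInvariant at hv
  rw [hact_mul (ℛ k h)]
  simp_rw [hv, smul_mul_assoc, ← mul_smul_comm, ← Finset.mul_sum, ← smul_hact,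
    ← sum_hact, sum_counit_smul]

lemma hact_mul_of_isHInvariant_right {v : R} (hv : IsHInvariant k H v) (h : H) (x : R) :
    hact k H h (x * v) = hact k H h x * v := by
  unfold IsHInvariant at hv
  rw [hact_mul (ℛ k h)]
  simp_rw [hv, mul_smul_comm, ← smul_mul_assoc, ← Finset.sum_mul, ← smul_hact,
    ← sum_hact, sum_counit_right_smul]

end Action

section Gt

variable (k H : Type*) {R : Type*} [CommRing k] [Ring H] [Algebra k H] [Coalgebra k H]
  [NonUnitalRing R] [Module k R] [SMulCommClass k R R] [IsScalarTower k R R] [HModAlg k H R]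

lemma isHIdeal_univ : IsHIdeal k H (Set.univ : Set R) := by
  constructor <;> intros <;> trivial

/-- `G_t(a)`, computed within the whole of `R`. -/
def gtAddSubmonoid (t : H) (a : R) : AddSubmonoid R where
  carrier := {z | memGt k H t Set.univ a z}
  zero_mem' := ⟨0, trivial, [], by simp, by simp⟩
  add_mem' := by
    rintro _ _ ⟨x, -, l, -, rfl⟩ ⟨x', -, l', -, rfl⟩
    refine ⟨x + x', trivial, l ++ l', by simp, ?_⟩
    simp only [mul_add, List.map_append, List.sum_append]
    abel

variable {k H} {t : H} {a : R}

lemma add_hact_mul_mem_gtAddSubmonoid (x : R) :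
    x + hact k H t a * x ∈ gtAddSubmonoid k H t a :=
  ⟨x, trivial, [], by simp, by simp⟩

lemma mul_hact_mul_add_mul_mem_gtAddSubmonoid (x y : R) :
    x * hact k H t a * y + x * y ∈ gtAddSubmonoid k H t a :=
  ⟨0, trivial, [(x, y)], by simp, by simp⟩

lemma map_mem_gtAddSubmonoid (φ : R →+ R)
    (h₁ : ∀ x, φ (x + hact k H t a * x) ∈ gtAddSubmonoid k H t a)
    (h₂ : ∀ x y, φ (x * hact k H t a * y + x * y) ∈ gtAddSubmonoid k H t a)
    {z : R} (hz : z ∈ gtAddSubmonoid k H t a) : φ z ∈ gtAddSubmonoid k H t a := by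
  obtain ⟨x, -, l, -, rfl⟩ := hz
  rw [map_add, map_list_sum, List.map_map]
  refine add_mem (h₁ x) (AddSubmonoid.list_sum_mem _ fun _ hy => ?_)
  obtain ⟨p, -, rfl⟩ := List.mem_map.mp hy
  exact h₂ p.1 p.2

lemma isHIdeal_gtAddSubmonoid (hu : IsHInvariant k H (hact k H t a)) :
    IsHIdeal k H (gtAddSubmonoid k H t a : Set R) := by
  have gen₁ := add_hact_mul_mem_gtAddSubmonoid (k := k) (H := H) (t := t) (a := a)
  have gen₂ := mul_hact_mul_add_mul_mem_gtAddSubmonoid (k := k) (H := H) (t := t) (a := a)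
  refine ⟨Set.subset_univ _, zero_mem _, add_mem, fun hz => ?_, fun {r} _ _ hz => ?_,
    fun hz r _ => ?_, fun h _ hz => ?_⟩
  · refine map_mem_gtAddSubmonoid (-AddMonoidHom.id R) (fun x => ?_) (fun x y => ?_) hz
    · simpa [add_comm] using gen₁ (-x)
    · simpa [add_comm] using gen₂ (-x) y
  · refine map_mem_gtAddSubmonoid (AddMonoidHom.mulLeft r) (fun x => ?_) (fun x y => ?_) hz
    · simpa [mul_add, mul_assoc, add_comm] using gen₂ r x
    · simpa [mul_add, mul_assoc] using gen₂ (r * x) y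
  · refine map_mem_gtAddSubmonoid (AddMonoidHom.mulRight r) (fun x => ?_) (fun x y => ?_) hz
    · simpa [add_mul, mul_assoc] using gen₁ (x * r)
    · simpa [add_mul, mul_assoc] using gen₂ x (y * r)
  · refine map_mem_gtAddSubmonoid (hsmul h).toAddMonoidHom (fun x => ?_) (fun x y => ?_) hz
    · change hact k H h (x + hact k H t a * x) ∈ _
      rw [hact_add, hact_mul_of_isHInvariant_left hu]
      exact gen₁ _
    · change hact k H h (x * hact k H t a * y + x * y) ∈ _
      rw [mul_assoc, ← mul_add, hact_mul (ℛ k h)]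
      refine sum_mem fun i _ => ?_
      rw [hact_add, hact_mul_of_isHInvariant_left hu, mul_add, ← mul_assoc]
      exact gen₂ _ _

end Gt

section Hopf

variable {k H R : Type*} [CommRing k] [Ring H] [HopfAlgebra k H]
  [NonUnitalRing R] [Module k R] [SMulCommClass k R R] [IsScalarTower k R R] [HModAlg k H R]

lemma sum_hact_hact_antipode {ι : Type*} {h : H} (𝓡 : Repr k h ι) (r : R) :
    ∑ i ∈ 𝓡.index, hact k H (𝓡.left i) (hact k H (HopfAlgebra.antipode k (𝓡.right i)) r) =
      counit (R := k) h • r := by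
  simp_rw [← mul_hact, ← sum_hact, HopfAlgebra.sum_mul_antipode_eq_smul,
    smul_hact, one_hact]

/-- In Sweedler notation, `(h·e) r = Σ (h₁·e) (h₂ S(h₃)·r) = Σ h₁·(e (S(h₂)·r)) = ε(h) r`;
the middle equality is coassociativity, carried by the trilinear map `Φ`. -/
lemma hact_mul_eq_counit_smul_of_mul_eq_self {e : R} (he : ∀ x, e * x = x) (h : H) (r : R) :
    hact k H h e * r = counit (R := k) h • r := by
  let ψ : H ⊗[k] H →ₗ[k] R :=
    TensorProduct.lift
      ((hsmul (k := k)).compl₂ ((hsmul (k := k)).flip r ∘ₗ HopfAlgebra.antipode k))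
  let Φ : H ⊗[k] (H ⊗[k] H) →ₗ[k] R :=
    TensorProduct.lift ((LinearMap.mul k R).compl₁₂ ((hsmul (k := k)).flip e) ψ)
  have hΦ (a b c : H) :
      Φ (a ⊗ₜ (b ⊗ₜ c)) = hact k H a e * hact k H b (hact k H (HopfAlgebra.antipode k c) r) :=
    rfl
  let 𝓡 := ℛ k h
  let 𝓡₁ := fun i => ℛ k (𝓡.left i)
  let 𝓡₂ := fun i => ℛ k (𝓡.right i)
  calc hact k H h e * r
      = ∑ i ∈ 𝓡.index, hact k H (𝓡.left i) e * (counit (R := k) (𝓡.right i) • r) := by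
        conv_lhs => rw [← sum_counit_right_smul 𝓡]
        simp_rw [sum_hact, Finset.sum_mul, smul_hact, smul_mul_assoc, mul_smul_comm]
    _ = Φ (∑ i ∈ 𝓡.index, ∑ j ∈ (𝓡₂ i).index,
          𝓡.left i ⊗ₜ ((𝓡₂ i).left j ⊗ₜ (𝓡₂ i).right j)) := by
        simp only [map_sum, hΦ, ← Finset.mul_sum, sum_hact_hact_antipode]
    _ = Φ (∑ i ∈ 𝓡.index, ∑ j ∈ (𝓡₁ i).index,
          (𝓡₁ i).left j ⊗ₜ ((𝓡₁ i).right j ⊗ₜ 𝓡.right i)) := by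
        rw [sum_tmul_tmul_eq 𝓡 𝓡₁ 𝓡₂]
    _ = ∑ i ∈ 𝓡.index,
          hact k H (𝓡.left i) (e * hact k H (HopfAlgebra.antipode k (𝓡.right i)) r) := by
        simp only [map_sum, hΦ, hact_mul (𝓡₁ _)]
    _ = counit (R := k) h • r := by simp_rw [he, sum_hact_hact_antipode]

end Hopf

section Unit

variable {k H R : Type*} [CommRing k] [Ring H] [Algebra k H] [Coalgebra k H]
  [NonUnitalRing R] [Module k R] [SMulCommClass k R R] [IsScalarTower k R R] [HModAlg k H R]

lemma eq_zero_of_memGt_of_hact_mul_eq_neg {t : H} {B : Set R} {a z : R}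
    (ha : ∀ y, hact k H t a * y = -y) (hz : memGt k H t B a z) : z = 0 := by
  obtain ⟨x, -, l, -, rfl⟩ := hz
  simp [mul_assoc, ha]

lemma neg_hact_mul_eq_self_of_gtAddSubmonoid_eq_zero {t : H} {a : R}
    (h : (gtAddSubmonoid k H t a : Set R) = {0}) (x : R) : -hact k H t a * x = x := by
  have : x + hact k H t a * x ∈ ({0} : Set R) := h ▸ add_hact_mul_mem_gtAddSubmonoid x
  rw [Set.mem_singleton_iff] at this
  rw [neg_mul, neg_eq_of_add_eq_zero_left this]

lemma isHIdeal_range_sub_mul {v : R} (hv : IsHInvariant k H v) (hleft : ∀ x, v * x = x) :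
    IsHIdeal k H (Set.range fun x : R => x - x * v) := by
  refine ⟨Set.subset_univ _, ⟨0, by simp⟩, ?_, ?_, ?_, ?_, ?_⟩
  · rintro _ _ ⟨x, rfl⟩ ⟨y, rfl⟩
    exact ⟨x + y, by noncomm_ring⟩
  · rintro _ ⟨x, rfl⟩
    exact ⟨-x, by noncomm_ring⟩
  · rintro r - _ ⟨x, rfl⟩
    exact ⟨r * x, by noncomm_ring⟩
  · rintro _ ⟨x, rfl⟩ r -
    exact ⟨0, by simp only [zero_mul, sub_mul, mul_assoc, hleft, sub_self]⟩
  · rintro h _ ⟨x, rfl⟩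
    exact ⟨hact k H h x, by rw [hact_sub, hact_mul_of_isHInvariant_right hv]⟩

lemma mul_eq_self_of_isHInvariant {v : R} (hv : IsHInvariant k H v) (hleft : ∀ x, v * x = x)
    (hR2 : ∃ a b : R, a * b ≠ 0)
    (hsimple : ∀ I : Set R, IsHIdeal k H I → I = {0} ∨ I = Set.univ) (x : R) : x * v = x := by
  rcases hsimple _ (isHIdeal_range_sub_mul hv hleft) with h0 | huniv
  · have : x - x * v ∈ ({0} : Set R) := h0 ▸ ⟨x, rfl⟩
    exact (sub_eq_zero.mp this).symm
  · obtain ⟨a, b, hab⟩ := hR2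
    obtain ⟨y, hy⟩ : a ∈ Set.range fun x : R => x - x * v := huniv ▸ trivial
    exact absurd (by rw [← hy, sub_mul, mul_assoc, hleft, sub_self]) hab

end Unit

end HModAlg

open HModAlg in
theorem stmt18_general {k H R : Type*} [Field k] [Ring H] [HopfAlgebra k H]
    [NonUnitalRing R] [Module k R] [SMulCommClass k R R] [IsScalarTower k R R]
    [HModAlg k H R]
    (t : H) (ht : ∀ h : H, h * t = Coalgebra.counit (R := k) h • t)
    (hε : Coalgebra.counit (R := k) t = (1 : k))
    (hR2 : ∃ a b : R, a * b ≠ 0)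
    (hsimple : ∀ I : Set R, IsHIdeal k H I → I = {0} ∨ I = Set.univ)
    (B : Set R) (hB : IsGtRadical k H t B) :
    B = {0} ↔ ∃ e : R, ∀ a : R, e * a = a ∧ a * e = a := by
  constructor
  · intro hB0
    obtain ⟨a, ha⟩ : ∃ a : R, ¬ memGt k H t Set.univ a a := by
      by_contra! hall
      obtain ⟨a, b, hab⟩ := hR2
      have : a ∈ B := hB.2 Set.univ ⟨isHIdeal_univ k H, fun a _ => hall a⟩ trivial
      rw [hB0, Set.mem_singleton_iff] at this
      exact hab (by rw [this, zero_mul])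
    have hu := isHInvariant_hact_of_mul_eq_counit_smul ht a
    rcases hsimple _ (isHIdeal_gtAddSubmonoid hu) with h0 | huniv
    · have hleft := neg_hact_mul_eq_self_of_gtAddSubmonoid_eq_zero h0
      exact ⟨_, fun x => ⟨hleft x, mul_eq_self_of_isHInvariant hu.neg hleft hR2 hsimple x⟩⟩
    · exact absurd (huniv ▸ trivial : a ∈ (gtAddSubmonoid k H t a : Set R)) ha
  · rintro ⟨e, he⟩
    refine (hsimple B hB.1.1).resolve_right fun huniv => ?_
    have hneg (y : R) : hact k H t (-e) * y = -y := by
      rw [hact_neg, neg_mul, hact_mul_eq_counit_smul_of_mul_eq_self (fun x => (he x).1), hε,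
        one_smul]
    have he0 : -e = 0 := eq_zero_of_memGt_of_hact_mul_eq_neg hneg (hB.1.2 _ (huniv ▸ trivial))
    obtain ⟨a, b, hab⟩ := hR2
    exact hab (by rw [← (he a).1, neg_eq_zero.mp he0, zero_mul, zero_mul])

/-- for a finite-dimensional semisimple Hopf algebra `H` with left
integral `t`, `ε(t) = 1`, and an `H`-simple module algebra `R`:
`r_{gt}(R) = 0` iff `R` has a unit. -/
theorem stmt18 {k H R : Type*} [Field k] [Ring H] [HopfAlgebra k H]
    [FiniteDimensional k H] [IsSemisimpleRing H]
    [NonUnitalRing R] [Module k R] [SMulCommClass k R R] [IsScalarTower k R R]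
    [HModAlg k H R]
    (t : H) (ht : ∀ h : H, h * t = Coalgebra.counit (R := k) h • t)
    (hε : Coalgebra.counit (R := k) t = (1 : k))
    (hR2 : ∃ a b : R, a * b ≠ 0)
    (hsimple : ∀ I : Set R, IsHIdeal k H I → I = {0} ∨ I = Set.univ)
    (B : Set R) (hB : IsGtRadical k H t B) :
    B = {0} ↔ ∃ e : R, ∀ a : R, e * a = a ∧ a * e = a :=
  stmt18_general t ht hε hR2 hsimple B hB
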